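/- Let G: R^n → R be convex with conjugate G* having compact domain, let α ∈ R^n and μ̄ ≥ 0, and let μ ∈ argmax_{ν ≤ μ̄} ⟨ν,α⟩ − G*(ν). Then the set of Lagrange multipliers T^G(α,μ̄) = argmax_{τ ≥ 0} ⟨μ̄, α−τ⟩ − G(α−τ) equals (α − ∂G*(μ)) ∩ {τ : τ ≥ 0} ∩ {τ : ⟨τ, μ̄−μ⟩ = 0}. -/
import Mathlib


noncomputable section

/-- Legendre–Fenchel conjugate (valued in `EReal`) of a real-valued function. -/
def conjR {n : ℕ} (G : (Fin n → ℝ) → ℝ) (μ : Fin n → ℝ) : EReal :=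
  ⨆ p : Fin n → ℝ, ((∑ i, p i * μ i : ℝ) : EReal) - (G p : EReal)

/-- Subdifferential of the conjugate `G*` at `μ`. -/
def subdiffConj {n : ℕ} (G : (Fin n → ℝ) → ℝ) (μ : Fin n → ℝ) : Set (Fin n → ℝ) :=
  {p | (G p : EReal) + conjR G μ = ((∑ i, p i * μ i : ℝ) : EReal)}

open Set Pointwise in
set_option maxHeartbeats 1000000 in
lemma kkt_orthant {n : ℕ} {f : (Fin n → ℝ) → ℝ} (hf : ConvexOn ℝ Set.univ f)
    {τ : Fin n → ℝ} (hτ : 0 ≤ τ) (hmin : ∀ x : Fin n → ℝ, 0 ≤ x → f τ ≤ f x) :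
    ∃ σ : Fin n → ℝ, 0 ≤ σ ∧ (∀ i, 0 < τ i → σ i = 0) ∧
      ∀ d : Fin n → ℝ, f τ + ∑ i, σ i * d i ≤ f (τ + d) := by
  classical
  set Q : (Fin n → ℝ) → ℝ → ℝ := fun d t => (f (τ + t • d) - f τ) / t with hQ
  -- monotonicity of difference quotients
  have hQmono : ∀ d : Fin n → ℝ, ∀ s t : ℝ, 0 < s → s ≤ t → Q d s ≤ Q d t := by
    intro d s t hs hst
    have ht : 0 < t := lt_of_lt_of_le hs hst
    have hl1 : s / t ≤ 1 := (div_le_one ht).2 hst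
    have hl0 : 0 ≤ s / t := le_of_lt (div_pos hs ht)
    have hc : f ((s / t) • (τ + t • d) + (1 - s / t) • τ)
        ≤ (s / t) * f (τ + t • d) + (1 - s / t) * f τ :=
      hf.2 (mem_univ (τ + t • d)) (mem_univ τ) hl0 (by linarith) (by ring)
    have hpt : (s / t) • (τ + t • d) + (1 - s / t) • τ = τ + s • d := by
      have : (s / t) * t = s := div_mul_cancel₀ s (ne_of_gt ht)
      funext j
      simp only [Pi.add_apply, Pi.smul_apply, smul_eq_mul]
      field_simp
      ring
    rw [hpt] at hc
    have key : f (τ + s • d) - f τ ≤ (s / t) * (f (τ + t • d) - f τ) := by linarith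
    rw [hQ]
    simp only []
    rw [div_le_div_iff₀ hs ht]
    have key2 := mul_le_mul_of_nonneg_right key ht.le
    have h3 : s / t * (f (τ + t • d) - f τ) * t = (f (τ + t • d) - f τ) * s := by
      field_simp
    linarith [key2, h3.symm.le]
  have hQzero : ∀ t : ℝ, Q 0 t = 0 := by
    intro t
    simp [hQ]
  have hQsub : ∀ d e : Fin n → ℝ, ∀ t s : ℝ, 0 < t → 0 < s →
      Q (d + e) (t * s / (t + s)) ≤ Q d t + Q e s := by
    intro d e t s ht hs
    have hts : 0 < t + s := by linarith
    have ha : (0:ℝ) ≤ s / (t + s) := le_of_lt (div_pos hs hts)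
    have hb : (0:ℝ) ≤ t / (t + s) := le_of_lt (div_pos ht hts)
    have hab : s / (t + s) + t / (t + s) = 1 := by field_simp; ring
    have hc : f ((s / (t + s)) • (τ + t • d) + (t / (t + s)) • (τ + s • e))
        ≤ (s / (t + s)) * f (τ + t • d) + (t / (t + s)) * f (τ + s • e) :=
      hf.2 (mem_univ _) (mem_univ _) ha hb hab
    have hpt : (s / (t + s)) • (τ + t • d) + (t / (t + s)) • (τ + s • e)
        = τ + (t * s / (t + s)) • (d + e) := by
      funext j
      simp only [Pi.add_apply, Pi.smul_apply, smul_eq_mul]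
      field_simp
      ring
    rw [hpt] at hc
    have hu : 0 < t * s / (t + s) := div_pos (mul_pos ht hs) hts
    rw [hQ]
    simp only []
    rw [div_add_div _ _ (ne_of_gt ht) (ne_of_gt hs), div_le_div_iff₀ hu (mul_pos ht hs)]
    have expand : (s / (t + s)) * f (τ + t • d) + (t / (t + s)) * f (τ + s • e) - f τ
        = (s / (t + s)) * (f (τ + t • d) - f τ) + (t / (t + s)) * (f (τ + s • e) - f τ) := by
      linear_combination (f τ) * hab
    have hc2 : f (τ + (t * s / (t + s)) • (d + e)) - f τ
        ≤ (s / (t + s)) * (f (τ + t • d) - f τ) + (t / (t + s)) * (f (τ + s • e) - f τ) := by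
      linarith [hc, expand.le]
    have hmul := mul_le_mul_of_nonneg_right hc2 (le_of_lt (mul_pos ht hs))
    have hid : ((s / (t + s)) * (f (τ + t • d) - f τ)
          + (t / (t + s)) * (f (τ + s • e) - f τ)) * (t * s)
        = ((f (τ + t • d) - f τ) * s + (f (τ + s • e) - f τ) * t) * (t * s / (t + s)) := by
      field_simp
    linarith [hmul, hid.le, hid.symm.le]
  have hQlb : ∀ d : Fin n → ℝ, ∀ t : ℝ, 0 < t → -(Q (-d) 1) ≤ Q d t := by
    intro d t ht
    have := hQsub d (-d) t 1 ht one_pos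
    rw [add_neg_cancel, hQzero] at this
    linarith
  -- the set of difference quotients and its infimum
  set S : (Fin n → ℝ) → Set ℝ := fun d => (fun t => Q d t) '' Ioi 0 with hS
  have hSne : ∀ d, (S d).Nonempty := fun d => ⟨Q d 1, ⟨1, Set.mem_Ioi.mpr one_pos, rfl⟩⟩
  have hSbdd : ∀ d, BddBelow (S d) := by
    rintro d
    refine ⟨-(Q (-d) 1), ?_⟩
    rintro y ⟨t, ht, rfl⟩
    exact hQlb d t (Set.mem_Ioi.mp ht)
  set N : (Fin n → ℝ) → ℝ := fun d => sInf (S d) with hN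
  have hNle : ∀ d : Fin n → ℝ, ∀ t : ℝ, 0 < t → N d ≤ Q d t := by
    intro d t ht
    exact csInf_le (hSbdd d) ⟨t, ht, rfl⟩
  have hNlb : ∀ d : Fin n → ℝ, -(Q (-d) 1) ≤ N d := by
    intro d
    refine le_csInf (hSne d) ?_
    rintro y ⟨t, ht, rfl⟩
    exact hQlb d t (Set.mem_Ioi.mp ht)
  have hNsub : ∀ d e : Fin n → ℝ, N (d + e) ≤ N d + N e := by
    intro d e
    rw [← sub_le_iff_le_add']
    refine le_csInf (hSne e) ?_
    rintro y ⟨s, hs, rfl⟩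
    rw [Set.mem_Ioi] at hs
    show N (d + e) - N d ≤ Q e s
    rw [sub_le_comm]
    refine le_csInf (hSne d) ?_
    rintro y ⟨t, ht, rfl⟩
    rw [Set.mem_Ioi] at ht
    show N (d + e) - Q e s ≤ Q d t
    rw [sub_le_iff_le_add]
    have hu : 0 < t * s / (t + s) := div_pos (mul_pos ht hs) (by linarith)
    calc N (d + e) ≤ Q (d + e) (t * s / (t + s)) := hNle _ _ hu
      _ ≤ Q d t + Q e s := hQsub d e t s ht hs
  have hNzero : N 0 = 0 := by
    have h1 : N 0 ≤ Q 0 1 := hNle 0 1 one_pos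
    have h2 := hNlb 0
    rw [hQzero] at h1
    rw [neg_zero, hQzero] at h2
    linarith
  have hNhom : ∀ c : ℝ, 0 < c → ∀ d : Fin n → ℝ, N (c • d) = c * N d := by
    intro c hc d
    have hc' : c ≠ 0 := ne_of_gt hc
    have hQscale : ∀ t : ℝ, 0 < t → Q (c • d) t = c * Q d (c * t) := by
      intro t ht
      have ht' : t ≠ 0 := ne_of_gt ht
      rw [hQ]
      simp only []
      rw [smul_smul, mul_comm t c]
      field_simp
    have hset : S (c • d) = (fun y => c * y) '' S d := by
      ext y
      constructor
      · rintro ⟨t, ht, rfl⟩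
        rw [Set.mem_Ioi] at ht
        exact ⟨Q d (c * t), ⟨c * t, Set.mem_Ioi.mpr (mul_pos hc ht), rfl⟩,
          (hQscale t ht).symm⟩
      · rintro ⟨y', ⟨t, ht, rfl⟩, rfl⟩
        rw [Set.mem_Ioi] at ht
        refine ⟨t / c, Set.mem_Ioi.mpr (div_pos ht hc), ?_⟩
        show Q (c • d) (t / c) = c * Q d t
        rw [hQscale (t / c) (div_pos ht hc), mul_div_cancel₀ t hc']
    rw [hN]
    simp only []
    rw [hset]
    have : (fun y => c * y) '' S d = c • S d := by
      ext y; simp [Set.mem_smul_set, smul_eq_mul]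
    rw [this, Real.sInf_smul_of_nonneg hc.le, smul_eq_mul]
  -- the tangent cone to the orthant at τ
  set K : Set (Fin n → ℝ) := {d | ∀ i, τ i = 0 → 0 ≤ d i} with hK
  have hK0 : (0 : Fin n → ℝ) ∈ K := fun i _ => le_refl 0
  have hKpos : ∀ k ∈ K, 0 ≤ N k := by
    intro k hk
    -- small positive ε keeping τ + ε • k in the orthant
    have hev : ∀ᶠ t in nhdsWithin (0:ℝ) (Ioi 0),
        (0:ℝ) < t ∧ ∀ i, 0 ≤ τ i + t * k i := by
      refine Filter.Eventually.and ?_ ?_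
      · exact eventually_mem_nhdsWithin
      · rw [Filter.eventually_all]
        intro i
        rcases eq_or_lt_of_le (hτ i) with h0 | h0
        · have h0' : τ i = 0 := by simpa using h0.symm
          have hki : 0 ≤ k i := hk i h0'
          filter_upwards [eventually_mem_nhdsWithin] with t ht
          have htp : (0:ℝ) < t := ht
          have := mul_nonneg htp.le hki
          rw [h0']
          linarith
        · have hcont : Filter.Tendsto (fun t : ℝ => τ i + t * k i) (nhds 0) (nhds (τ i)) := by
            have : Continuous fun t : ℝ => τ i + t * k i := by continuity
            have h := this.tendsto 0
            simpa using h
          have := hcont.eventually_const_lt h0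
          exact (this.mono fun t ht => le_of_lt ht).filter_mono nhdsWithin_le_nhds
    obtain ⟨ε, hε, hεk⟩ := hev.exists
    refine le_csInf (hSne k) ?_
    rintro y ⟨t, ht, rfl⟩
    rw [Set.mem_Ioi] at ht
    show 0 ≤ Q k t
    have hmpos : 0 < min t ε := lt_min ht hε
    have hmle : min t ε ≤ t := min_le_left t ε
    have hmε : min t ε ≤ ε := min_le_right t ε
    have hfeas : 0 ≤ τ + (min t ε) • k := by
      intro i
      have h1 := hεk i
      have h2 := hτ i
      simp only [Pi.add_apply, Pi.smul_apply, smul_eq_mul, Pi.zero_apply]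
      nlinarith [mul_nonneg (sub_nonneg.2 hmε) h2, mul_nonneg hmpos.le h1]
    have hQm : 0 ≤ Q k (min t ε) := by
      rw [hQ]
      simp only []
      exact div_nonneg (by linarith [hmin _ hfeas]) hmpos.le
    linarith [hQmono k (min t ε) t hmpos hmle]
  -- infimal convolution with the cone K
  set T : (Fin n → ℝ) → Set ℝ := fun d => (fun k => N (d + k)) '' K with hT
  have hTne : ∀ d, (T d).Nonempty := fun d => ⟨N (d + 0), ⟨0, hK0, rfl⟩⟩
  have hTbdd : ∀ d, BddBelow (T d) := by
    intro d
    refine ⟨-(N (-d)), ?_⟩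
    rintro y ⟨k, hk, rfl⟩
    have h1 := hNsub (d + k) (-d)
    have h2 : d + k + -d = k := by abel
    rw [h2] at h1
    linarith [hKpos k hk]
  set M : (Fin n → ℝ) → ℝ := fun d => sInf (T d) with hM
  have hMleT : ∀ d : Fin n → ℝ, ∀ k ∈ K, M d ≤ N (d + k) := by
    intro d k hk
    exact csInf_le (hTbdd d) ⟨k, hk, rfl⟩
  have hMle : ∀ d : Fin n → ℝ, M d ≤ N d := by
    intro d
    have := hMleT d 0 hK0
    rwa [add_zero] at this
  have hMK : ∀ k ∈ K, M (-k) ≤ 0 := by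
    intro k hk
    have := hMleT (-k) k hk
    rwa [neg_add_cancel, hNzero] at this
  have hM0 : 0 ≤ M 0 := by
    refine le_csInf (hTne 0) ?_
    rintro y ⟨k, hk, rfl⟩
    show 0 ≤ N (0 + k)
    rw [zero_add]
    exact hKpos k hk
  have hMsub : ∀ d e : Fin n → ℝ, M (d + e) ≤ M d + M e := by
    intro d e
    rw [← sub_le_iff_le_add']
    refine le_csInf (hTne e) ?_
    rintro y ⟨k', hk', rfl⟩
    show M (d + e) - M d ≤ N (e + k')
    rw [sub_le_comm]
    refine le_csInf (hTne d) ?_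
    rintro y ⟨k, hk, rfl⟩
    show M (d + e) - N (e + k') ≤ N (d + k)
    rw [sub_le_iff_le_add]
    have hkk : k + k' ∈ K := fun i hi => add_nonneg (hk i hi) (hk' i hi)
    have h1 := hMleT (d + e) (k + k') hkk
    have h2 := hNsub (d + k) (e + k')
    have h3 : d + k + (e + k') = d + e + (k + k') := by abel
    rw [h3] at h2
    linarith
  have hMhom : ∀ c : ℝ, 0 < c → ∀ d : Fin n → ℝ, M (c • d) = c * M d := by
    intro c hc d
    have hc' : c ≠ 0 := ne_of_gt hc
    have hset : T (c • d) = (fun y => c * y) '' T d := by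
      ext y
      constructor
      · rintro ⟨k, hk, rfl⟩
        have hk' : c⁻¹ • k ∈ K := by
          intro i hi
          have := hk i hi
          have : 0 ≤ c⁻¹ * k i := mul_nonneg (inv_nonneg.2 hc.le) this
          simpa using this
        refine ⟨N (d + c⁻¹ • k), ⟨c⁻¹ • k, hk', rfl⟩, ?_⟩
        show c * N (d + c⁻¹ • k) = N (c • d + k)
        rw [← hNhom c hc]
        congr 1
        rw [smul_add, smul_smul, mul_inv_cancel₀ hc', one_smul]
      · rintro ⟨y', ⟨k, hk, rfl⟩, rfl⟩
        have hck : c • k ∈ K := by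
          intro i hi
          have := hk i hi
          have : 0 ≤ c * k i := mul_nonneg hc.le this
          simpa using this
        refine ⟨c • k, hck, ?_⟩
        show N (c • d + c • k) = c * N (d + k)
        rw [← smul_add, hNhom c hc]
    rw [hM]
    simp only []
    rw [hset]
    have heq : (fun y => c * y) '' T d = c • T d := by
      ext y; simp [Set.mem_smul_set, smul_eq_mul]
    rw [heq, Real.sInf_smul_of_nonneg hc.le, smul_eq_mul]
  -- Hahn–Banach: a linear functional below M
  obtain ⟨g, -, hg⟩ :=
    exists_extension_of_le_sublinear (⟨⊥, 0⟩ : (Fin n → ℝ) →ₗ.[ℝ] ℝ) M hMhom hMsub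
      (fun x => by
        have hx : (x : Fin n → ℝ) = 0 := (Submodule.mem_bot ℝ).1 x.2
        show (0 : ℝ) ≤ M x
        rw [hx]
        exact hM0)
  have hgK : ∀ k ∈ K, 0 ≤ g k := by
    intro k hk
    have h1 := hg (-k)
    have h2 := hMK k hk
    rw [map_neg] at h1
    linarith [hMle (-k)]
  have hgle : ∀ d : Fin n → ℝ, g d ≤ f (τ + d) - f τ := by
    intro d
    have h1 := (hg d).trans (hMle d)
    have h2 := hNle d 1 one_pos
    have h3 : Q d 1 = f (τ + d) - f τ := by
      rw [hQ]; simp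
    linarith
  refine ⟨fun i => g (fun j => if i = j then 1 else 0), ?_, ?_, ?_⟩
  · intro i
    refine hgK _ ?_
    intro j hj
    by_cases h : i = j <;> simp [h]
  · intro i hi
    have h1 : 0 ≤ g (fun j => if i = j then 1 else 0) := by
      refine hgK _ ?_
      intro j hj
      by_cases h : i = j <;> simp [h]
    have h2 : 0 ≤ g (-(fun j => if i = j then 1 else 0)) := by
      refine hgK _ ?_
      intro j hj
      have hij : i ≠ j := by
        rintro rfl
        exact absurd hj (ne_of_gt hi)
      simp [hij]
    rw [map_neg] at h2
    linarith
  · intro d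
    have h1 := hgle d
    have h2 := g.pi_apply_eq_sum_univ d
    have h3 : ∑ i, (fun i => g (fun j => if i = j then 1 else 0)) i * d i
        = ∑ i, d i • g (fun j => if i = j then 1 else 0) := by
      refine Finset.sum_congr rfl fun i _ => ?_
      rw [smul_eq_mul, mul_comm]
    rw [h3, ← h2]
    linarith

lemma conjR_ge {n : ℕ} (G : (Fin n → ℝ) → ℝ) (μ p : Fin n → ℝ) :
    ((∑ i, p i * μ i - G p : ℝ) : EReal) ≤ conjR G μ := by
  rw [EReal.coe_sub]
  exact le_iSup (fun p => ((∑ i, p i * μ i : ℝ) : EReal) - (G p : EReal)) p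

lemma conjR_of_subgrad {n : ℕ} (G : (Fin n → ℝ) → ℝ) (ν p : Fin n → ℝ)
    (h : ∀ q : Fin n → ℝ, G p + ∑ i, ν i * (q i - p i) ≤ G q) :
    conjR G ν = ((∑ i, p i * ν i - G p : ℝ) : EReal) := by
  refine le_antisymm ?_ (conjR_ge G ν p)
  refine iSup_le fun q => ?_
  rw [← EReal.coe_sub, EReal.coe_le_coe_iff]
  have h1 := h q
  have h2 : ∑ i, ν i * (q i - p i) = (∑ i, q i * ν i) - ∑ i, p i * ν i := by
    rw [← Finset.sum_sub_distrib]
    exact Finset.sum_congr rfl fun i _ => by ring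
  linarith [h1, h2.symm.le]

lemma sum_mul_sub {n : ℕ} (a b c : Fin n → ℝ) :
    ∑ i, a i * (b i - c i) = (∑ i, a i * b i) - ∑ i, a i * c i := by
  rw [← Finset.sum_sub_distrib]
  exact Finset.sum_congr rfl fun i _ => by ring

lemma sum_sub_mul {n : ℕ} (a b c : Fin n → ℝ) :
    ∑ i, (b - c) i * a i = (∑ i, b i * a i) - ∑ i, c i * a i := by
  rw [← Finset.sum_sub_distrib]
  refine Finset.sum_congr rfl fun i _ => ?_
  simp only [Pi.sub_apply]
  ring

set_option maxHeartbeats 1000000 in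
/-- Kuhn–Tucker characterization of the Lagrange multipliers `T^G(α,μ̄)`:
they are exactly `(α − ∂G*(μ)) ∩ {τ ≥ 0} ∩ {⟨τ, μ̄−μ⟩ = 0}` for any primal
optimizer `μ`. -/
theorem lagrange_multiplier_characterization {n : ℕ} (G : (Fin n → ℝ) → ℝ)
    (hGconv : ConvexOn ℝ Set.univ G)
    (hGc : IsCompact {μ : Fin n → ℝ | conjR G μ ≠ ⊤})
    (α μbar μ : Fin n → ℝ) (hμbar : 0 ≤ μbar)
    (hμ : μ ≤ μbar ∧ ∀ ν : Fin n → ℝ, ν ≤ μbar →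
      ((∑ i, ν i * α i : ℝ) : EReal) - conjR G ν ≤
        ((∑ i, μ i * α i : ℝ) : EReal) - conjR G μ) :
    {τ : Fin n → ℝ | 0 ≤ τ ∧ ∀ τ' : Fin n → ℝ, 0 ≤ τ' →
        (∑ i, μbar i * (α i - τ' i)) - G (α - τ') ≤
          (∑ i, μbar i * (α i - τ i)) - G (α - τ)} =
      {τ : Fin n → ℝ | (α - τ) ∈ subdiffConj G μ ∧ 0 ≤ τ ∧
        ∑ i, τ i * (μbar i - μ i) = 0} := by

  obtain ⟨hμle, hμopt⟩ := hμ
  ext τ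
  simp only [Set.mem_setOf_eq, subdiffConj]
  constructor
  · rintro ⟨hτ0, hopt⟩
    -- the dual objective as a function to minimize
    have hfconv : ConvexOn ℝ Set.univ
        (fun x : Fin n → ℝ => (∑ i, μbar i * x i) + G (α - x)) := by
      refine ⟨convex_univ, ?_⟩
      intro x _ y _ a b ha hb hab
      have hpt : α - (a • x + b • y) = a • (α - x) + b • (α - y) := by
        funext j
        simp only [Pi.sub_apply, Pi.add_apply, Pi.smul_apply, smul_eq_mul]
        linear_combination (α j) * hab.symm
      have hG := hGconv.2 (Set.mem_univ (α - x)) (Set.mem_univ (α - y)) ha hb hab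
      have hlin : ∑ i, μbar i * (a • x + b • y) i
          = a * (∑ i, μbar i * x i) + b * (∑ i, μbar i * y i) := by
        rw [Finset.mul_sum, Finset.mul_sum, ← Finset.sum_add_distrib]
        refine Finset.sum_congr rfl fun i _ => ?_
        simp only [Pi.add_apply, Pi.smul_apply, smul_eq_mul]
        ring
      simp only [smul_eq_mul] at hG ⊢
      rw [hpt]
      nlinarith [hG, hlin]
    have hfmin : ∀ x, 0 ≤ x →
        (∑ i, μbar i * τ i) + G (α - τ) ≤ (∑ i, μbar i * x i) + G (α - x) := by
      intro x hx
      have h1 := hopt x hx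
      have e1 := sum_mul_sub μbar α x
      have e2 := sum_mul_sub μbar α τ
      linarith
    obtain ⟨σ, hσ0, hστ, hσsub⟩ := kkt_orthant hfconv hτ0 hfmin
    -- the subgradient ν = μbar - σ of G at α - τ
    have hνsub : ∀ q : Fin n → ℝ,
        G (α - τ) + ∑ i, (μbar - σ) i * (q i - (α - τ) i) ≤ G q := by
      intro q
      have h1 := hσsub (α - τ - q)
      have hid1 : τ + (α - τ - q) = α - q := by abel
      rw [hid1] at h1
      have hid2 : α - (α - q) = q := by abel
      rw [hid2] at h1
      have key : ∑ i, (μbar - σ) i * (q i - (α - τ) i)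
          = ((∑ i, μbar i * τ i) + ∑ i, σ i * (α - τ - q) i)
            - ∑ i, μbar i * (α - q) i := by
        rw [← Finset.sum_add_distrib, ← Finset.sum_sub_distrib]
        refine Finset.sum_congr rfl fun i _ => ?_
        simp only [Pi.sub_apply]
        ring
      linarith [h1, key]
    have hconjν : conjR G (μbar - σ)
        = (((∑ i, (α - τ) i * (μbar - σ) i) - G (α - τ) : ℝ) : EReal) :=
      conjR_of_subgrad G (μbar - σ) (α - τ) hνsub
    -- weak duality and optimality of μ
    have hνle : μbar - σ ≤ μbar := by
      intro i
      simpa using sub_le_self (μbar i) (hσ0 i)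
    have hchain1 := hμopt (μbar - σ) hνle
    rw [hconjν, ← EReal.coe_sub] at hchain1
    have hwd := conjR_ge G μ (α - τ)
    have hτσ : ∑ i, τ i * σ i = 0 := by
      refine Finset.sum_eq_zero fun i _ => ?_
      rcases (hτ0 i).eq_or_lt with h | h
      · rw [← h]; simp
      · rw [hστ i (by simpa using h), mul_zero]
    -- real value identities
    have eA : (∑ i, (μbar - σ) i * α i) - ((∑ i, (α - τ) i * (μbar - σ) i) - G (α - τ))
        = (∑ i, τ i * μbar i) + G (α - τ) := by
      have e1 : ∑ i, (α - τ) i * (μbar - σ) i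
          = (∑ i, (μbar - σ) i * α i) - ∑ i, τ i * (μbar i - σ i) := by
        rw [← Finset.sum_sub_distrib]
        refine Finset.sum_congr rfl fun i _ => ?_
        simp only [Pi.sub_apply]
        ring
      have e2 := sum_mul_sub τ μbar σ
      linarith
    have hchain2 : ((∑ i, μ i * α i : ℝ) : EReal) - conjR G μ
        ≤ (((∑ i, τ i * μ i) + G (α - τ) : ℝ) : EReal) := by
      calc ((∑ i, μ i * α i : ℝ) : EReal) - conjR G μ
          ≤ ((∑ i, μ i * α i : ℝ) : EReal)
            - (((∑ i, (α - τ) i * μ i) - G (α - τ) : ℝ) : EReal) :=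
            EReal.sub_le_sub (le_refl _) hwd
        _ = (((∑ i, μ i * α i) - ((∑ i, (α - τ) i * μ i) - G (α - τ)) : ℝ) : EReal) :=
            (EReal.coe_sub _ _).symm
        _ = (((∑ i, τ i * μ i) + G (α - τ) : ℝ) : EReal) := by
            rw [EReal.coe_eq_coe_iff]
            have e3 := sum_sub_mul μ α τ
            have e4 : ∑ i, μ i * α i = ∑ i, α i * μ i :=
              Finset.sum_congr rfl fun i _ => mul_comm _ _
            linarith
    have hchain3 : (∑ i, τ i * μ i) + G (α - τ) ≤ (∑ i, τ i * μbar i) + G (α - τ) := by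
      have : ∑ i, τ i * μ i ≤ ∑ i, τ i * μbar i :=
        Finset.sum_le_sum fun i _ => mul_le_mul_of_nonneg_left (hμle i) (hτ0 i)
      linarith
    -- close the chain
    rw [eA] at hchain1
    have hBA : (((∑ i, τ i * μ i) + G (α - τ) : ℝ) : EReal)
        ≤ ((∑ i, μ i * α i : ℝ) : EReal) - conjR G μ := by
      refine le_trans ?_ hchain1
      exact_mod_cast hchain3
    have hXC : ((∑ i, μ i * α i : ℝ) : EReal) - conjR G μ
        = (((∑ i, τ i * μ i) + G (α - τ) : ℝ) : EReal) := le_antisymm hchain2 hBA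
    have hCB : (∑ i, τ i * μ i) + G (α - τ) = (∑ i, τ i * μbar i) + G (α - τ) := by
      have h1 : (((∑ i, τ i * μbar i) + G (α - τ) : ℝ) : EReal)
          ≤ (((∑ i, τ i * μ i) + G (α - τ) : ℝ) : EReal) := hXC ▸ hchain1
      have h2 := EReal.coe_le_coe_iff.1 h1
      linarith
    -- complementary slackness
    have hcs : ∑ i, τ i * (μbar i - μ i) = 0 := by
      have := sum_mul_sub τ μbar μ
      linarith
    -- finiteness of conjR G μ
    have htop : conjR G μ ≠ ⊤ := by
      intro h
      rw [h, EReal.sub_top] at hXC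
      exact (EReal.coe_ne_bot _) hXC.symm
    have hbot : conjR G μ ≠ ⊥ :=
      ((EReal.bot_lt_coe _).trans_le hwd).ne'
    have hr : ((conjR G μ).toReal : EReal) = conjR G μ := EReal.coe_toReal htop hbot
    have hXC' : (∑ i, μ i * α i) - (conjR G μ).toReal = (∑ i, τ i * μ i) + G (α - τ) := by
      rw [← EReal.coe_eq_coe_iff, EReal.coe_sub, hr]
      exact hXC
    refine ⟨?_, hτ0, hcs⟩
    rw [← hr, ← EReal.coe_add, EReal.coe_eq_coe_iff]
    have e3 := sum_sub_mul μ α τ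
    have e4 : ∑ i, μ i * α i = ∑ i, α i * μ i :=
      Finset.sum_congr rfl fun i _ => mul_comm _ _
    linarith
  · rintro ⟨hsub, hτ0, hcs⟩
    refine ⟨hτ0, ?_⟩
    intro τ' hτ'
    have hbot : conjR G μ ≠ ⊥ := by
      intro h
      rw [h, EReal.add_bot] at hsub
      exact (EReal.coe_ne_bot _) hsub.symm
    have htop : conjR G μ ≠ ⊤ := by
      intro h
      rw [h, EReal.coe_add_top] at hsub
      exact (EReal.coe_ne_top _) hsub.symm
    have hr : ((conjR G μ).toReal : EReal) = conjR G μ := EReal.coe_toReal htop hbot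
    have hreq : G (α - τ) + (conjR G μ).toReal = ∑ i, (α - τ) i * μ i := by
      rw [← EReal.coe_eq_coe_iff, EReal.coe_add, hr]
      exact hsub
    have hwd' := conjR_ge G μ (α - τ')
    rw [← hr, EReal.coe_le_coe_iff] at hwd'
    -- expand all the sums
    have e1 := sum_mul_sub μbar α τ'
    have e2 := sum_mul_sub μbar α τ
    have e3 := sum_sub_mul μ α τ'
    have e4 := sum_sub_mul μ α τ
    have e5 := sum_mul_sub τ μbar μ
    have e6 := sum_mul_sub τ' μbar μ
    have e7 : 0 ≤ ∑ i, τ' i * (μbar i - μ i) :=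
      Finset.sum_nonneg fun i _ => mul_nonneg (hτ' i) (sub_nonneg.2 (hμle i))
    have c1 : ∑ i, μbar i * τ' i = ∑ i, τ' i * μbar i :=
      Finset.sum_congr rfl fun i _ => mul_comm _ _
    have c2 : ∑ i, μbar i * τ i = ∑ i, τ i * μbar i :=
      Finset.sum_congr rfl fun i _ => mul_comm _ _
    linarith
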